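/- Let k be a field of characteristic 2, K = k(s), and M the k[x,y]/(x²,y²)-module with basis {u_i, v_i : i ≥ 0} as above. On Hom_k(K, M) with the action ((x+sy)·f)(a) = x·f(a) + y·f(sa), the k-linear map f : K → M sending a rational function φ with polynomial part α_0 + α_1 s + α_2 s² + ⋯ (from its partial fraction decomposition) to α_0 u_0 + α_1 u_1 + ⋯ lies in the kernel of x + sy but not in the image of x + sy. In particular the kernel of x + sy on Hom_k(K,M) strictly contains its image. -/

import Mathlib

/-- The underlying space of the Klein-four module `M` with basis `{uᵢ, vᵢ : i ≥ 0}`. -/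
abbrev KleinM (k : Type*) [Field k] := ((ℕ →₀ k) × (ℕ →₀ k))

/-- Multiplication by `x`: `x·uᵢ = vᵢ`, `x·vᵢ = 0`. -/
noncomputable def opX (k : Type*) [Field k] : KleinM k →ₗ[k] KleinM k :=
  (LinearMap.inr k (ℕ →₀ k) (ℕ →₀ k)).comp (LinearMap.fst k (ℕ →₀ k) (ℕ →₀ k))

/-- Multiplication by `y`: `y·uᵢ = vᵢ₋₁` (with `v₋₁ = 0`), `y·vᵢ = 0`. -/
noncomputable def opY (k : Type*) [Field k] : KleinM k →ₗ[k] KleinM k :=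
  ((LinearMap.inr k (ℕ →₀ k) (ℕ →₀ k)).comp
    (Finsupp.lcomapDomain (fun n => n + 1) (add_left_injective 1))).comp
    (LinearMap.fst k (ℕ →₀ k) (ℕ →₀ k))

/-- Multiplication by `x + sy` on `Hom_k(K, M)`, `K = k(s)`:
`((x+sy)·f)(a) = x·f(a) + y·f(s·a)`. -/
noncomputable def opXsY (k : Type*) [Field k] :
    (RatFunc k →ₗ[k] KleinM k) → (RatFunc k →ₗ[k] KleinM k) := fun f =>
  (opX k).comp f + (opY k).comp (f.comp (LinearMap.mulLeft k (RatFunc.X : RatFunc k)))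

/-! The rational functions vanishing at infinity, i.e. those of valuation `< 1` for the valuation
at `1/s`, form a `k`-subspace of `k(s)` meeting `k[s]` only in `0`; so the polynomial part is the
unique polynomial `p` with `v(φ - p) < 1`, hence `k`-linear. Multiplying by `s` raises this
valuation by one step, so the polynomial part of `sφ` is `s` times that of `φ` up to a constant:
`α_{n+1}(sφ) = α_n(φ)`. Thus `(x + sy) f` sends `φ` to `∑ (α_n + α_n) v_n = 0` in characteristic
`2`. On the other hand `(x + sy) g` only takes values in the span of the `v_n`, while
`f 1 = u_0`. -/

open Polynomial WithZero

namespace RatFunc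

variable {k : Type*} [Field k]

noncomputable def polynomialPart (φ : RatFunc k) : k[X] := φ.num /ₘ φ.denom

section InftyValuation

variable [DecidableEq (RatFunc k)]

theorem inftyValuation_sub_polynomialPart_lt_one (φ : RatFunc k) :
    inftyValuation k (φ - algebraMap k[X] (RatFunc k) φ.polynomialPart) < 1 := by
  have hden : algebraMap k[X] (RatFunc k) φ.denom ≠ 0 := by simp [φ.denom_ne_zero]
  have hnum : φ * algebraMap k[X] (RatFunc k) φ.denom = algebraMap k[X] (RatFunc k) φ.num := by
    rw [← eq_div_iff hden, num_div_denom]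
  have hrem : φ - algebraMap k[X] (RatFunc k) φ.polynomialPart =
      algebraMap k[X] (RatFunc k) (φ.num %ₘ φ.denom) / algebraMap k[X] (RatFunc k) φ.denom := by
    rw [eq_div_iff hden, sub_mul, hnum, ← map_mul, ← map_sub,
      modByMonic_eq_sub_mul_div, polynomialPart, mul_comm]
  rcases eq_or_ne (φ.num %ₘ φ.denom) 0 with hr | hr
  · simp [hrem, hr]
  rw [hrem, map_div₀, div_lt_one₀ (zero_lt_iff.mpr (by simpa using hden)), inftyValuation_apply,
    inftyValuation_apply, inftyValuation.polynomial k hr,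
    inftyValuation.polynomial k φ.denom_ne_zero, exp_lt_exp, Nat.cast_lt]
  exact natDegree_lt_natDegree hr (degree_modByMonic_lt _ φ.monic_denom)

theorem eq_zero_of_inftyValuation_lt_one {p : k[X]}
    (h : inftyValuation k (algebraMap k[X] (RatFunc k) p) < 1) : p = 0 := by
  by_contra hp
  rw [inftyValuation_apply, inftyValuation.polynomial k hp, ← exp_zero, exp_lt_exp] at h
  omega

theorem natDegree_eq_zero_of_inftyValuation_lt_exp_one {p : k[X]}
    (h : inftyValuation k (algebraMap k[X] (RatFunc k) p) < exp 1) : p.natDegree = 0 := by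
  rcases eq_or_ne p 0 with rfl | hp
  · rfl
  rw [inftyValuation_apply, inftyValuation.polynomial k hp, exp_lt_exp] at h
  omega

theorem polynomialPart_eq_of_inftyValuation_sub_lt_one {φ : RatFunc k} {p : k[X]}
    (h : inftyValuation k (φ - algebraMap k[X] (RatFunc k) p) < 1) : φ.polynomialPart = p := by
  rw [← sub_eq_zero]
  apply eq_zero_of_inftyValuation_lt_one
  simpa only [map_sub, sub_sub_sub_cancel_left] using
    Valuation.map_sub_lt _ h (inftyValuation_sub_polynomialPart_lt_one φ)

end InftyValuation

theorem polynomialPart_add (φ ψ : RatFunc k) :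
    (φ + ψ).polynomialPart = φ.polynomialPart + ψ.polynomialPart := by
  classical
  apply polynomialPart_eq_of_inftyValuation_sub_lt_one
  simpa only [map_add, add_sub_add_comm] using Valuation.map_add_lt _
    (inftyValuation_sub_polynomialPart_lt_one φ) (inftyValuation_sub_polynomialPart_lt_one ψ)

theorem polynomialPart_smul (c : k) (φ : RatFunc k) :
    (c • φ).polynomialPart = c • φ.polynomialPart := by
  classical
  apply polynomialPart_eq_of_inftyValuation_sub_lt_one
  rw [Algebra.smul_def, Algebra.smul_def, map_mul, ← IsScalarTower.algebraMap_apply, ← mul_sub,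
    Valuation.map_mul]
  exact mul_lt_one_of_nonneg_of_lt_one_right (Valuation.IsTrivialOn.valuation_algebraMap_le_one _ c)
    zero_le (inftyValuation_sub_polynomialPart_lt_one φ)

theorem polynomialPart_one : (1 : RatFunc k).polynomialPart = 1 := by
  rw [polynomialPart, num_one, denom_one, divByMonic_one]

theorem coeff_polynomialPart_X_mul (φ : RatFunc k) (n : ℕ) :
    (X * φ).polynomialPart.coeff (n + 1) = φ.polynomialPart.coeff n := by
  classical
  suffices hconst : ((X * φ).polynomialPart - Polynomial.X * φ.polynomialPart).natDegree = 0 by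
    simpa [sub_eq_zero, coeff_X_mul] using
      congrArg (coeff · (n + 1)) (eq_C_of_natDegree_eq_zero hconst)
  apply natDegree_eq_zero_of_inftyValuation_lt_exp_one
  have hφ : inftyValuation k (X * (φ - algebraMap k[X] (RatFunc k) φ.polynomialPart)) < exp 1 := by
    rw [Valuation.map_mul, inftyValuation.X]
    exact mul_lt_of_lt_one_right exp_pos (inftyValuation_sub_polynomialPart_lt_one φ)
  have hXφ : inftyValuation k (X * φ - algebraMap k[X] (RatFunc k) (X * φ).polynomialPart) <
      exp 1 :=
    (inftyValuation_sub_polynomialPart_lt_one (X * φ)).trans (by rw [← exp_zero, exp_lt_exp]; omega)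
  simpa only [map_sub, map_mul, algebraMap_X, mul_sub, sub_sub_sub_cancel_left] using
    Valuation.map_sub_lt _ hφ hXφ

noncomputable def polynomialPartₗ : RatFunc k →ₗ[k] k[X] where
  toFun := polynomialPart
  map_add' := polynomialPart_add
  map_smul' := polynomialPart_smul

end RatFunc

section KleinModule

variable {k : Type*} [Field k] (g : RatFunc k →ₗ[k] KleinM k) (φ : RatFunc k)

theorem fst_opXsY_apply : (opXsY k g φ).1 = 0 := by
  simp [opXsY, opX, opY]

theorem snd_opXsY_apply (n : ℕ) :
    (opXsY k g φ).2 n = (g φ).1 n + (g (RatFunc.X * φ)).1 (n + 1) := by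
  simp [opXsY, opX, opY, Finsupp.lcomapDomain]

end KleinModule

/-- The `k`-linear map `f : K → M` sending a rational function `φ` with polynomial part
`α₀ + α₁s + α₂s² + ⋯` (from its partial fraction decomposition) to `α₀u₀ + α₁u₁ + ⋯`
lies in the kernel of `x + sy` but not in its image. -/
theorem stmt12 (k : Type*) [Field k] [CharP k 2] :
    ∃ f : RatFunc k →ₗ[k] KleinM k,
      (∀ φ : RatFunc k, f φ = (((φ.num /ₘ φ.denom).toFinsupp.coeff : ℕ →₀ k), (0 : ℕ →₀ k))) ∧
      opXsY k f = 0 ∧ f ∉ Set.range (opXsY k) := by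
  let f : RatFunc k →ₗ[k] KleinM k :=
    LinearMap.inl k _ _ ∘ₗ (basisMonomials k).repr.toLinearMap ∘ₗ RatFunc.polynomialPartₗ
  have hf (φ : RatFunc k) (n : ℕ) : (f φ).1 n = φ.polynomialPart.coeff n := rfl
  refine ⟨f, fun φ => rfl, ?_, ?_⟩
  · ext φ n
    · simp [fst_opXsY_apply]
    · rw [snd_opXsY_apply, hf, hf, RatFunc.coeff_polynomialPart_X_mul, CharTwo.add_self_eq_zero]
      rfl
  · rintro ⟨g, hg⟩
    have hu₀ : (f 1).1 0 = 1 := by rw [hf, RatFunc.polynomialPart_one, coeff_one_zero]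
    simp [← hg, fst_opXsY_apply] at hu₀
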